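/- arXiv:2402.06274 — 11 statements merged into one kernel-verified Lean document; each statement's English description precedes it below -/
import Mathlib

section
/- Let G be a finite group and let K = x^G and D = d^G be conjugacy classes with KK⁻¹ = {1} ∪ D. Then ⟨D⟩ = [x,G] (the subgroup generated by all commutators [x,g], g ∈ G) and ⟨K⟩ = ⟨x⟩[x,G]. -/
open scoped Pointwise

private lemma normal_of_conj {G : Type*} [Group G] (S : Set G)
    (hS : ∀ s ∈ S, ∀ g : G, g * s * g⁻¹ ∈ Subgroup.closure S) :
    (Subgroup.closure S).Normal := by
  constructor
  intro n hn g
  induction hn using Subgroup.closure_induction with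
  | mem s hs => exact hS s hs g
  | one => simpa using Subgroup.one_mem _
  | mul a b _ _ ha hb =>
      have : g * (a * b) * g⁻¹ = (g * a * g⁻¹) * (g * b * g⁻¹) := by group
      rw [this]; exact Subgroup.mul_mem _ ha hb
  | inv a _ ha =>
      have : g * a⁻¹ * g⁻¹ = (g * a * g⁻¹)⁻¹ := by group
      rw [this]; exact Subgroup.inv_mem _ ha

theorem closure_of_D_eq_commutators
    {G : Type*} [Group G] [Finite G] (x d : G)
    (h : conjugatesOf x * (conjugatesOf x)⁻¹ = {1} ∪ conjugatesOf d) :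
    Subgroup.closure (conjugatesOf d) =
      Subgroup.closure {y : G | ∃ g : G, y = x⁻¹ * (g⁻¹ * x * g)} ∧
    Subgroup.closure (conjugatesOf x) =
      Subgroup.closure {x} ⊔ Subgroup.closure {y : G | ∃ g : G, y = x⁻¹ * (g⁻¹ * x * g)} := by
  set S : Set G := {y : G | ∃ g : G, y = x⁻¹ * (g⁻¹ * x * g)} with hSdef
  have hSmem : ∀ g : G, x⁻¹ * (g⁻¹ * x * g) ∈ Subgroup.closure S :=
    fun g => Subgroup.subset_closure ⟨g, rfl⟩
  have hN : (Subgroup.closure S).Normal := by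
    apply normal_of_conj
    rintro s ⟨a, rfl⟩ g
    have : g * (x⁻¹ * (a⁻¹ * x * a)) * g⁻¹ =
        (x⁻¹ * ((g⁻¹)⁻¹ * x * g⁻¹))⁻¹ * (x⁻¹ * ((a * g⁻¹)⁻¹ * x * (a * g⁻¹))) := by
      group
    rw [this]
    exact Subgroup.mul_mem _ (Subgroup.inv_mem _ (hSmem g⁻¹)) (hSmem (a * g⁻¹))
  have hD : (Subgroup.closure (conjugatesOf d)).Normal := by
    apply normal_of_conj
    intro s hs g
    exact Subgroup.subset_closure (hs.trans ((isConj_iff).2 ⟨g, rfl⟩))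
  have part1 : Subgroup.closure (conjugatesOf d) = Subgroup.closure S := by
    apply le_antisymm
    · rw [Subgroup.closure_le]
      intro y hy
      have hy' : y ∈ conjugatesOf x * (conjugatesOf x)⁻¹ := by
        rw [h]; exact Or.inr hy
      obtain ⟨a, ha, b, hb, rfl⟩ := hy'
      rw [Set.mem_inv] at hb
      obtain ⟨g, rfl⟩ := (isConj_iff).1 ha
      obtain ⟨k, hk⟩ := (isConj_iff).1 hb
      have hb' : b = (k * x * k⁻¹)⁻¹ := by rw [hk, inv_inv]
      have key : (g * x * g⁻¹) * (k * x * k⁻¹)⁻¹ =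
          (k * x * k⁻¹) * ((x⁻¹ * ((k⁻¹)⁻¹ * x * k⁻¹))⁻¹ *
            (x⁻¹ * ((g⁻¹)⁻¹ * x * g⁻¹))) * (k * x * k⁻¹)⁻¹ := by
        group
      show (g * x * g⁻¹) * b ∈ _
      rw [hb', key]
      exact hN.conj_mem _
        (Subgroup.mul_mem _ (Subgroup.inv_mem _ (hSmem k⁻¹)) (hSmem g⁻¹)) _
    · rw [Subgroup.closure_le]
      rintro s ⟨g, rfl⟩
      have hmem : (g⁻¹ * x * g) * x⁻¹ ∈ conjugatesOf x * (conjugatesOf x)⁻¹ := by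
        refine ⟨g⁻¹ * x * g, (isConj_iff).2 ⟨g⁻¹, by group⟩, x⁻¹, ?_, rfl⟩
        rw [Set.mem_inv]; simpa using mem_conjugatesOf_self
      rw [h] at hmem
      have hne : (g⁻¹ * x * g) * x⁻¹ ∈ Subgroup.closure (conjugatesOf d) := by
        rcases hmem with h1 | h2
        · rw [Set.mem_singleton_iff] at h1; rw [h1]; exact Subgroup.one_mem _
        · exact Subgroup.subset_closure h2
      have key : x⁻¹ * (g⁻¹ * x * g) = x⁻¹ * ((g⁻¹ * x * g) * x⁻¹) * x⁻¹⁻¹ := by group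
      rw [key]
      exact hD.conj_mem _ hne _
  refine ⟨part1, le_antisymm ?_ ?_⟩
  · rw [Subgroup.closure_le]
    intro y hy
    obtain ⟨g, rfl⟩ := (isConj_iff).1 hy
    have : g * x * g⁻¹ = x * (x⁻¹ * ((g⁻¹)⁻¹ * x * g⁻¹)) := by group
    rw [this]
    exact Subgroup.mul_mem _
      (Subgroup.mem_sup_left (Subgroup.subset_closure rfl))
      (Subgroup.mem_sup_right (hSmem g⁻¹))
  · apply sup_le
    · rw [Subgroup.closure_le]
      rintro y rfl
      exact Subgroup.subset_closure mem_conjugatesOf_self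
    · rw [Subgroup.closure_le]
      rintro s ⟨g, rfl⟩
      exact Subgroup.mul_mem _
        (Subgroup.inv_mem _ (Subgroup.subset_closure mem_conjugatesOf_self))
        (Subgroup.subset_closure ((isConj_iff).2 ⟨g⁻¹, by group⟩))
end

section
/- Let K and D be conjugacy classes of a finite group G such that KK⁻¹ = {1} ∪ D ∪ D⁻¹. If K is a real conjugacy class (K = K⁻¹), then D is also a real conjugacy class (D = D⁻¹). -/
open scoped Pointwise

private lemma isConj_inv' {G : Type*} [Group G] {a b : G} (h : IsConj a b) :
    IsConj a⁻¹ b⁻¹ := by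
  rw [isConj_iff] at h ⊢
  obtain ⟨c, hc⟩ := h
  exact ⟨c, by rw [← hc]; group⟩

private lemma real_of_isConj_inv {G : Type*} [Group G] {d : G} (h : IsConj d d⁻¹) :
    conjugatesOf d = (conjugatesOf d)⁻¹ := by
  ext y
  simp only [Set.mem_inv, conjugatesOf, Set.mem_setOf_eq]
  constructor
  · intro hy
    exact h.trans (isConj_inv' hy)
  · intro hy
    have := isConj_inv' hy
    rw [inv_inv] at this
    exact h.trans this

theorem real_class_implies_D_real
    {G : Type*} [Group G] [Finite G] (x d : G)
    (h : conjugatesOf x * (conjugatesOf x)⁻¹ = {1} ∪ conjugatesOf d ∪ (conjugatesOf d)⁻¹)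
    (hreal : conjugatesOf x = (conjugatesOf x)⁻¹) :
    conjugatesOf d = (conjugatesOf d)⁻¹ := by
  -- every element of K is conjugate to its inverse
  have hselfinv : ∀ a ∈ conjugatesOf x, IsConj a a⁻¹ := by
    intro a ha
    have ha' : a⁻¹ ∈ conjugatesOf x := Set.mem_inv.mp (hreal ▸ ha)
    exact ha.symm.trans ha'
  by_cases hsq : ∀ a ∈ conjugatesOf x, a * a = 1
  · -- all elements of K are involutions
    have hd : d ∈ conjugatesOf x * (conjugatesOf x)⁻¹ := by
      rw [h]; exact Or.inl (Or.inr mem_conjugatesOf_self)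
    obtain ⟨a, ha, b, hb, hab⟩ := hd
    have hbK : b ∈ conjugatesOf x := hreal ▸ hb
    have ha2 : a⁻¹ = a := by
      have := hsq a ha
      rw [inv_eq_iff_mul_eq_one]; rw [this]
    have hb2 : b⁻¹ = b := by
      have := hsq b hbK
      rw [inv_eq_iff_mul_eq_one]; rw [this]
    apply real_of_isConj_inv
    rw [isConj_iff]
    refine ⟨a⁻¹, ?_⟩
    rw [← hab]
    show a⁻¹ * (a * b) * a⁻¹⁻¹ = (a * b)⁻¹
    calc a⁻¹ * (a * b) * a⁻¹⁻¹ = b * a := by group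
      _ = b⁻¹ * a⁻¹ := by rw [ha2, hb2]
      _ = (a * b)⁻¹ := (mul_inv_rev _ _).symm
  · push_neg at hsq
    obtain ⟨a, ha, ha2ne⟩ := hsq
    have haK' : a ∈ (conjugatesOf x)⁻¹ := hreal ▸ ha
    have haa : a * a ∈ conjugatesOf x * (conjugatesOf x)⁻¹ := Set.mul_mem_mul ha haK'
    rw [h] at haa
    -- a² is conjugate to its inverse
    have hconjsq : IsConj (a * a) (a * a)⁻¹ := by
      obtain ⟨c, hc⟩ := isConj_iff.mp (hselfinv a ha)
      rw [isConj_iff]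
      refine ⟨c, ?_⟩
      rw [mul_inv_rev]
      calc c * (a * a) * c⁻¹ = (c * a * c⁻¹) * (c * a * c⁻¹) := by group
        _ = a⁻¹ * a⁻¹ := by rw [hc]
    rcases haa with (h1 | hD) | hDinv
    · exact absurd (Set.mem_singleton_iff.mp h1) ha2ne
    · -- a * a ∈ D
      have hdc : IsConj d (a * a) := hD
      exact real_of_isConj_inv (hdc.trans (hconjsq.trans (isConj_inv' hdc.symm)))
    · -- a * a ∈ D⁻¹, so (a*a)⁻¹ ∈ D
      have hdc : IsConj d (a * a)⁻¹ := Set.mem_inv.mp hDinv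
      have : IsConj d⁻¹ (a * a)⁻¹⁻¹ := isConj_inv' hdc
      rw [inv_inv] at this
      exact real_of_isConj_inv (hdc.trans (hconjsq.symm.trans this.symm))
end

section
/- Let K be a non-trivial conjugacy class of a finite group G such that KK⁻¹ = {1} ∪ D, where D is a conjugacy class of G. Then |D| divides |K|(|K|−1). -/
/-!
Conjugation permutes the pairs `(a, b)` of distinct elements of `K`, and `(a, b) ↦ a * b⁻¹` is
equivariant, with values in `D` by hypothesis. Its fibres over the points of `D` are therefore
conjugate to one another, so `|K| (|K| - 1) = |D| · |fibre|`.
-/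

open scoped Pointwise

open MulAction

section EquivariantFibers

variable {G α β : Type*} [Group G] [MulAction G α] [MulAction G β]

theorem MulActionHom.smul_inter_preimage_singleton (f : α →[G] β) {s : Set α}
    (hs : ∀ g : G, ∀ a ∈ s, g • a ∈ s) (g : G) (b : β) :
    g • (s ∩ f ⁻¹' {b}) = s ∩ f ⁻¹' {g • b} := by
  ext a
  have hmem : g⁻¹ • a ∈ s ↔ a ∈ s :=
    ⟨fun h ↦ by simpa using hs g _ h, hs g⁻¹ a⟩
  simp [Set.mem_smul_set_iff_inv_smul_mem, hmem, inv_smul_eq_iff]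

theorem MulActionHom.ncard_orbit_mul_ncard_inter_preimage [Finite α] [Finite β]
    (f : α →[G] β) {s : Set α} (hs : ∀ g : G, ∀ a ∈ s, g • a ∈ s) {b : β}
    (hsb : Set.MapsTo f s (orbit G b)) :
    (orbit G b).ncard * (s ∩ f ⁻¹' {b}).ncard = s.ncard := by
  classical
  have := Fintype.ofFinite α
  have := Fintype.ofFinite β
  rw [Set.ncard_eq_toFinset_card' s, Set.ncard_eq_toFinset_card' (orbit G b),
    Finset.card_eq_sum_card_fiberwise (f := f) (t := (orbit G b).toFinset)
      (fun a ha ↦ by simpa using hsb (by simpa using ha)),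
    Finset.sum_const_nat]
  rintro _ hc
  obtain ⟨g, rfl⟩ := Set.mem_toFinset.mp hc
  rw [← Set.ncard_coe_finset, ← Set.ncard_smul_set g (s ∩ f ⁻¹' {b}),
    smul_inter_preimage_singleton f hs]
  congr 1
  ext
  simp

end EquivariantFibers

theorem Set.ncard_offDiag {α : Type*} {s : Set α} (hs : s.Finite) :
    s.offDiag.ncard = s.ncard * (s.ncard - 1) := by
  lift s to Finset α using hs
  rw [← Finset.coe_offDiag, ncard_coe_finset, ncard_coe_finset, Finset.offDiag_card,
    Nat.mul_sub_one]

theorem conjugatesOf_eq_orbit_conjAct {G : Type*} [Group G] (g : G) :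
    conjugatesOf g = orbit (ConjAct G) g := by
  ext
  rw [ConjAct.mem_orbit_conjAct, isConj_comm]
  rfl

def ConjAct.mulInvHom (G : Type*) [Group G] : G × G →[ConjAct G] G where
  toFun p := p.1 * p.2⁻¹
  map_smul' g p := by
    simp [ConjAct.smul_def]

theorem card_D_dvd_card_K_mul_card_K_sub_one_general
    {G : Type*} [Group G] [Finite G] (x d : G)
    (h : conjugatesOf x * (conjugatesOf x)⁻¹ = {1} ∪ conjugatesOf d) :
    (conjugatesOf d).ncard ∣ (conjugatesOf x).ncard * ((conjugatesOf x).ncard - 1) := by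
  have hinv : ∀ g : ConjAct G, ∀ p ∈ (conjugatesOf x).offDiag,
      g • p ∈ (conjugatesOf x).offDiag := by
    rintro g ⟨a, b⟩ ⟨ha, hb, hab⟩
    rw [conjugatesOf_eq_orbit_conjAct] at ha hb ⊢
    exact ⟨mem_orbit_of_mem_orbit g ha, mem_orbit_of_mem_orbit g hb,
      (MulAction.injective g).ne hab⟩
  have hmaps : Set.MapsTo (ConjAct.mulInvHom G) (conjugatesOf x).offDiag
      (orbit (ConjAct G) d) := by
    rintro ⟨a, b⟩ ⟨ha, hb, hab⟩
    have hab' : a * b⁻¹ ∈ {1} ∪ conjugatesOf d :=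
      h ▸ Set.mul_mem_mul ha (Set.inv_mem_inv.2 hb)
    rw [← conjugatesOf_eq_orbit_conjAct]
    exact hab'.resolve_left (by simpa [mul_inv_eq_one] using hab)
  rw [← Set.ncard_offDiag (Set.toFinite _), conjugatesOf_eq_orbit_conjAct d]
  exact Dvd.intro _ ((ConjAct.mulInvHom G).ncard_orbit_mul_ncard_inter_preimage hinv hmaps)

theorem card_D_dvd_card_K_mul_card_K_sub_one
    {G : Type*} [Group G] [Finite G] (x d : G) (hx : x ≠ 1)
    (h : conjugatesOf x * (conjugatesOf x)⁻¹ = {1} ∪ conjugatesOf d) :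
    (conjugatesOf d).ncard ∣ (conjugatesOf x).ncard * ((conjugatesOf x).ncard - 1) :=
  card_D_dvd_card_K_mul_card_K_sub_one_general x d h
end

section
/- Let K be a conjugacy class of a finite group G such that KK⁻¹ = {1} ∪ D where D is a conjugacy class. Then the quotient ⟨K⟩/⟨D⟩ is cyclic. -/
open scoped Pointwise

lemma isCyclic_zpowers' {G : Type*} [Group G] (g : G) :
    IsCyclic (Subgroup.zpowers g) := by
  refine ⟨⟨⟨g, Subgroup.mem_zpowers g⟩, ?_⟩⟩
  rintro ⟨a, ha⟩
  obtain ⟨n, hn⟩ := Subgroup.mem_zpowers_iff.1 ha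
  exact ⟨n, by ext; simpa using hn⟩

theorem quotient_closureK_closureD_cyclic
    {G : Type*} [Group G] [Finite G] (x d : G)
    (h : conjugatesOf x * (conjugatesOf x)⁻¹ = {1} ∪ conjugatesOf d) :
    ∃ hN : (Subgroup.closure (conjugatesOf d)).Normal,
      letI := hN
      IsCyclic ((Subgroup.closure (conjugatesOf x)).map
        (QuotientGroup.mk' (Subgroup.closure (conjugatesOf d)))) := by
  have hset : Group.conjugatesOfSet ({d} : Set G) = conjugatesOf d := by
    simp [Group.conjugatesOfSet]
  have hN : (Subgroup.closure (conjugatesOf d)).Normal := by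
    rw [← hset]
    exact Subgroup.normalClosure_normal
  refine ⟨hN, ?_⟩
  letI := hN
  set N := Subgroup.closure (conjugatesOf d) with hNdef
  have key : ∀ a ∈ conjugatesOf x,
      (QuotientGroup.mk' N) a = (QuotientGroup.mk' N) x := by
    intro a ha
    have hmem : a * x⁻¹ ∈ ({1} : Set G) ∪ conjugatesOf d := by
      rw [← h]
      exact Set.mul_mem_mul ha (Set.inv_mem_inv.2 mem_conjugatesOf_self)
    have hmemN : a * x⁻¹ ∈ N := by
      rcases hmem with h1 | hD
      · simp only [Set.mem_singleton_iff] at h1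
        rw [h1]; exact N.one_mem
      · exact Subgroup.subset_closure hD
    have : x⁻¹ * a ∈ N := by
      have := hN.conj_mem _ hmemN x⁻¹
      simpa [mul_assoc] using this
    symm
    rw [QuotientGroup.mk'_apply, QuotientGroup.mk'_apply, QuotientGroup.eq]
    exact this
  have himg : (QuotientGroup.mk' N) '' conjugatesOf x = {(QuotientGroup.mk' N) x} := by
    apply Set.eq_singleton_iff_unique_mem.2
    constructor
    · exact ⟨x, mem_conjugatesOf_self, rfl⟩
    · rintro y ⟨a, ha, rfl⟩
      exact key a ha
  rw [MonoidHom.map_closure, himg, ← Subgroup.zpowers_eq_closure]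
  exact isCyclic_zpowers' _
end

section
/- Let K be a conjugacy class of a finite group G such that KK⁻¹ = {1} ∪ D where D is a conjugacy class with |D| = |K| − 1. Then ⟨D⟩ = {1} ∪ D, and ⟨D⟩ is an elementary abelian p-group for some prime p; consequently ⟨K⟩ is metabelian. -/
/-!
For `a ∈ K` the translate `a K⁻¹` lies in `KK⁻¹ = {1} ∪ D`, whose size is at most
`1 + |D| = |K|`; hence `a K⁻¹ = KK⁻¹` for every `a ∈ K`, which makes `KK⁻¹` closed under
products, so `S = {1} ∪ D` is a normal subgroup. All nontrivial elements of `S` are conjugate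
in `G`, so they share one order, which must be a prime `p`; thus `S` is a `p`-group. A
nontrivial central element of `S` lies in `D`, and the centralizer of the normal subgroup `S`
is normal, so all of `D` centralizes `S`. Finally `K ⊆ S x`, so `⟨K⟩ / S` is cyclic and
`⟨K⟩' ≤ S` is abelian.
-/

open scoped Pointwise

open Subgroup

section

variable {G : Type*} [Group G]

lemma IsConj.orderOf_eq {a b : G} (h : IsConj a b) : orderOf a = orderOf b :=
  let ⟨c, hc⟩ := h
  hc.orderOf_eq (c : G)

namespace Set

lemma ncard_le_ncard_mul_inv {K : Set G} (hK : K.Finite) (hne : K.Nonempty) :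
    K.ncard ≤ (K * K⁻¹).ncard := by
  obtain ⟨a, ha⟩ := hne
  calc K.ncard = (a • K⁻¹).ncard := by rw [ncard_smul_set, ncard_inv]
    _ ≤ (K * K⁻¹).ncard := ncard_le_ncard (smul_set_subset_mul ha) (hK.mul hK.inv)

lemma exists_subgroup_coe_eq_mul_inv_of_ncard_le {K : Set G} (hK : K.Finite) (hne : K.Nonempty)
    (hcard : (K * K⁻¹).ncard ≤ K.ncard) : ∃ H : Subgroup G, (H : Set G) = K * K⁻¹ := by
  have hcoset : ∀ a ∈ K, a • K⁻¹ = K * K⁻¹ := fun a ha =>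
    eq_of_subset_of_ncard_le (smul_set_subset_mul ha) (by rwa [ncard_smul_set, ncard_inv])
      (hK.mul hK.inv)
  refine ⟨{ carrier := K * K⁻¹, mul_mem' := ?mul, one_mem' := ?one, inv_mem' := ?inv }, rfl⟩
  case one =>
    obtain ⟨a, ha⟩ := hne
    exact ⟨a, ha, a⁻¹, inv_mem_inv.2 ha, mul_inv_cancel a⟩
  case mul =>
    rintro _ t ⟨a, ha, b, hb, rfl⟩ ht
    rw [← hcoset b⁻¹ hb] at ht
    obtain ⟨c, hc, rfl⟩ := ht
    exact ⟨a, ha, c, hc, by simp [mul_assoc]⟩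
  case inv =>
    rintro _ ⟨a, ha, b, hb, rfl⟩
    exact ⟨b⁻¹, hb, a⁻¹, by simpa using ha, by simp⟩

end Set

namespace Subgroup

lemma closure_eq_of_coe_eq_one_union {S : Subgroup G} {D : Set G} (hS : (S : Set G) = {1} ∪ D) :
    closure D = S :=
  le_antisymm ((closure_le S).2 (hS ▸ Set.subset_union_right)) <| by
    rw [← SetLike.coe_subset_coe, hS]
    exact Set.union_subset (Set.singleton_subset_iff.2 (one_mem _)) subset_closure

variable {H : Subgroup G} {d : G}

lemma mem_of_coe_eq_one_union_conjugatesOf (hH : (H : Set G) = {1} ∪ conjugatesOf d) :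
    d ∈ H := by
  rw [← SetLike.mem_coe, hH]
  exact Or.inr mem_conjugatesOf_self

lemma normal_of_coe_eq_one_union_conjugatesOf (hH : (H : Set G) = {1} ∪ conjugatesOf d) :
    H.Normal where
  conj_mem a ha g := by
    rw [← SetLike.mem_coe, hH] at ha ⊢
    rcases ha with rfl | ha
    · simp
    · exact Or.inr ((ha : IsConj d a).trans (isConj_iff.2 ⟨g, rfl⟩))

lemma mem_conjugatesOf_of_coe_eq_one_union_conjugatesOf
    (hH : (H : Set G) = {1} ∪ conjugatesOf d) {a : G} (ha : a ∈ H) (ha1 : a ≠ 1) :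
    a ∈ conjugatesOf d := by
  rw [← SetLike.mem_coe, hH] at ha
  exact ha.resolve_left ha1

lemma pow_orderOf_eq_one_of_coe_eq_one_union_conjugatesOf
    (hH : (H : Set G) = {1} ∪ conjugatesOf d) {a : G} (ha : a ∈ H) : a ^ orderOf d = 1 := by
  rw [← SetLike.mem_coe, hH] at ha
  rcases ha with rfl | ha
  · exact one_pow _
  · rw [(ha : IsConj d a).orderOf_eq]
    exact pow_orderOf_eq_one a

lemma orderOf_prime_of_coe_eq_one_union_conjugatesOf [Finite G]
    (hH : (H : Set G) = {1} ∪ conjugatesOf d) (hd : d ≠ 1) : (orderOf d).Prime := by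
  obtain ⟨q, hq, hqd⟩ := Nat.exists_prime_and_dvd (orderOf_eq_one_iff.not.2 hd)
  -- `d ^ (orderOf d / q)` has prime order `q`, and it is conjugate to `d`
  have he : orderOf (d ^ (orderOf d / q)) = q := orderOf_pow_orderOf_div (orderOf_pos d).ne' hqd
  have hconj := mem_conjugatesOf_of_coe_eq_one_union_conjugatesOf hH
    (H.pow_mem (mem_of_coe_eq_one_union_conjugatesOf hH) _)
    (fun h1 => hq.one_lt.ne' (by rw [← he, h1, orderOf_one]))
  rwa [(hconj : IsConj d _).orderOf_eq, he]

lemma le_centralizer_of_coe_eq_one_union_conjugatesOf [Finite G]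
    (hH : (H : Set G) = {1} ∪ conjugatesOf d) (hd : d ≠ 1) : H ≤ centralizer H := by
  have := normal_of_coe_eq_one_union_conjugatesOf hH
  have := Fact.mk (orderOf_prime_of_coe_eq_one_union_conjugatesOf hH hd)
  have hpGroup : IsPGroup (orderOf d) H := fun a =>
    ⟨1, Subtype.ext (by simpa using pow_orderOf_eq_one_of_coe_eq_one_union_conjugatesOf hH a.2)⟩
  have : Nontrivial H := 
    nontrivial_of_ne ⟨d, mem_of_coe_eq_one_union_conjugatesOf hH⟩ 1 fun h =>
      hd (congrArg Subtype.val h)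
  have := hpGroup.center_nontrivial
  obtain ⟨z, hz⟩ := exists_ne (1 : center H)
  have hzD : (z : G) ∈ conjugatesOf d := mem_conjugatesOf_of_coe_eq_one_union_conjugatesOf hH
    z.1.2 fun h => hz (Subtype.ext (Subtype.ext h))
  have hzC : (z : G) ∈ centralizer H := mem_centralizer_iff.2 fun b hb =>
    congrArg Subtype.val (mem_center_iff.1 z.2 ⟨b, hb⟩)
  -- `D` is the conjugacy class of `z`, and the centralizer of a normal subgroup is normal
  have hDC : conjugatesOf d ⊆ (centralizer (H : Set G) : Set G) := by
    rw [isConj_iff_conjugatesOf_eq.1 hzD]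
    exact Group.conjugates_subset_normal hzC
  intro a ha
  by_cases ha1 : a = 1
  · exact ha1 ▸ one_mem _
  · exact hDC (mem_conjugatesOf_of_coe_eq_one_union_conjugatesOf hH ha ha1)

lemma commutator_closure_le_of_forall_mul_inv_mem {N : Subgroup G} [N.Normal] {K : Set G} {x : G}
    (hK : ∀ k ∈ K, k * x⁻¹ ∈ N) : ⁅closure K, closure K⁆ ≤ N := by
  have hcyclic : (closure K).map (QuotientGroup.mk' N) ≤ zpowers (x : G ⧸ N) := by
    rw [MonoidHom.map_closure, closure_le]
    rintro _ ⟨k, hk, rfl⟩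
    exact ⟨1, by simpa [QuotientGroup.eq_iff_div_mem, div_eq_mul_inv] using N.inv_mem (hK k hk)⟩
  rw [← QuotientGroup.ker_mk' N, ← map_eq_bot_iff, map_commutator, eq_bot_iff]
  calc _ ≤ ⁅zpowers (x : G ⧸ N), zpowers (x : G ⧸ N)⁆ := commutator_mono hcyclic hcyclic
    _ = ⊥ := commutator_self_eq_bot_iff.2 inferInstance

lemma derivedSeries_two_eq_bot_of_commutator_le {H N : Subgroup G} (hHN : ⁅H, H⁆ ≤ N)
    (hN : N ≤ centralizer N) : derivedSeries H 2 = ⊥ := by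
  apply (map_eq_bot_iff_of_injective _ H.subtype_injective).1
  simp only [derivedSeries_succ, derivedSeries_zero, map_commutator, ← MonoidHom.range_eq_map,
    range_subtype]
  exact eq_bot_iff.2 ((commutator_mono hHN hHN).trans
    (commutator_eq_bot_iff_le_centralizer.2 hN).le)

end Subgroup

end

theorem closure_D_elementary_abelian_of_card_eq_sub_one
    {G : Type*} [Group G] [Finite G] (x d : G)
    (h : conjugatesOf x * (conjugatesOf x)⁻¹ = {1} ∪ conjugatesOf d)
    (hcard : (conjugatesOf d).ncard = (conjugatesOf x).ncard - 1) :
    (Subgroup.closure (conjugatesOf d) : Set G) = {1} ∪ conjugatesOf d ∧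
    (∃ p : ℕ, p.Prime ∧
      (∀ a ∈ Subgroup.closure (conjugatesOf d), ∀ b ∈ Subgroup.closure (conjugatesOf d),
        a * b = b * a) ∧
      (∀ a ∈ Subgroup.closure (conjugatesOf d), a ^ p = 1)) ∧
    derivedSeries (↥(Subgroup.closure (conjugatesOf x))) 2 = ⊥ := by
  set K := conjugatesOf x
  set D := conjugatesOf d
  have hK : K.Nonempty := ⟨x, mem_conjugatesOf_self⟩
  have hKcard : K.ncard = D.ncard + 1 := by
    have := (Set.ncard_pos (Set.toFinite K)).2 hK
    omega
  obtain ⟨S, hS⟩ := Set.exists_subgroup_coe_eq_mul_inv_of_ncard_le (Set.toFinite K) hK <| by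
    rw [h, hKcard, add_comm]
    exact (Set.ncard_union_le _ _).trans_eq (by rw [Set.ncard_singleton])
  have hd : d ≠ 1 := by
    rintro rfl
    have hD : D ⊆ {1} := fun b hb => isConj_one_right.1 hb
    have := Set.ncard_le_ncard_mul_inv (Set.toFinite K) hK
    rw [h, Set.union_eq_left.2 hD, Set.ncard_singleton] at this
    have := (Set.ncard_pos (Set.toFinite D)).2 ⟨1, mem_conjugatesOf_self⟩
    omega
  rw [h] at hS
  have hclosure : closure D = S := closure_eq_of_coe_eq_one_union hS
  have := normal_of_coe_eq_one_union_conjugatesOf hS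
  have hcomm := le_centralizer_of_coe_eq_one_union_conjugatesOf hS hd
  refine ⟨hclosure ▸ hS, ⟨orderOf d, orderOf_prime_of_coe_eq_one_union_conjugatesOf hS hd,
    fun a ha b hb => ?_, fun a ha => ?_⟩, ?_⟩
  · rw [hclosure] at ha hb
    exact (mem_centralizer_iff.1 (hcomm ha) b hb).symm
  · exact pow_orderOf_eq_one_of_coe_eq_one_union_conjugatesOf hS (hclosure ▸ ha)
  · refine derivedSeries_two_eq_bot_of_commutator_le
      (commutator_closure_le_of_forall_mul_inv_mem (x := x) fun k hk => ?_) hcomm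
    rw [← SetLike.mem_coe, hS, ← h]
    exact Set.mul_mem_mul hk (Set.inv_mem_inv.2 mem_conjugatesOf_self)
end

section
/- Let K be a conjugacy class of a finite group G such that KK⁻¹ = {1} ∪ D where D is a conjugacy class with |D| = |K|(|K|−1). Then ⟨K⟩ is abelian. -/
open scoped Pointwise

theorem closure_K_abelian_of_card_D_eq_K_mul_K_sub_one
    {G : Type*} [Group G] [Finite G] (x d : G)
    (h : conjugatesOf x * (conjugatesOf x)⁻¹ = {1} ∪ conjugatesOf d)
    (hcard : (conjugatesOf d).ncard = (conjugatesOf x).ncard * ((conjugatesOf x).ncard - 1)) :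
    ∀ a ∈ Subgroup.closure (conjugatesOf x), ∀ b ∈ Subgroup.closure (conjugatesOf x),
      a * b = b * a := by
  classical
  set K : Set G := conjugatesOf x with hKdef
  set D : Set G := conjugatesOf d with hDdef
  -- K is closed under conjugation
  have hKconj : ∀ g : G, ∀ a ∈ K, g * a * g⁻¹ ∈ K := by
    intro g a ha
    exact (ha : IsConj x a).trans (isConj_iff.mpr ⟨g, rfl⟩)
  have hxK : x ∈ K := mem_conjugatesOf_self
  -- 1 ∉ D
  have h1D : (1 : G) ∉ D := by
    intro h1
    have hd1 : d = 1 := isConj_one_left.mp ((h1 : IsConj d 1))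
    have hDone : D = {1} := by
      ext y
      simp [hDdef, conjugatesOf, hd1, eq_comm, isConj_one_right]
    rw [hDone] at hcard
    simp only [Set.ncard_singleton] at hcard
    have := Nat.eq_one_of_mul_eq_one_right hcard.symm
    have h2 : K.ncard - 1 = 1 := Nat.eq_one_of_mul_eq_one_left hcard.symm
    omega
  -- finsets
  have hKfin : K.Finite := Set.toFinite K
  have hDfin : D.Finite := Set.toFinite D
  set KF : Finset G := hKfin.toFinset with hKF
  set DF : Finset G := hDfin.toFinset with hDF
  set f : G × G → G := fun p => p.1 * p.2⁻¹ with hf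
  -- the image of the off-diagonal under f is DF
  have himage : KF.offDiag.image f = DF := by
    apply Finset.Subset.antisymm
    · intro e he
      obtain ⟨p, hp, hpe⟩ := Finset.mem_image.mp he
      rw [Finset.mem_offDiag] at hp
      obtain ⟨hp1, hp2, hp12⟩ := hp
      have hp1K : p.1 ∈ K := hKfin.mem_toFinset.mp hp1
      have hp2K : p.2 ∈ K := hKfin.mem_toFinset.mp hp2
      have hmem : e ∈ K * K⁻¹ := by
        rw [← hpe]
        exact Set.mul_mem_mul hp1K (Set.inv_mem_inv.mpr hp2K)
      rw [h] at hmem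
      rcases hmem with hmem | hmem
      · exfalso
        rw [Set.mem_singleton_iff] at hmem
        rw [← hpe] at hmem
        exact hp12 (by rwa [hf, mul_inv_eq_one] at hmem)
      · exact hDfin.mem_toFinset.mpr hmem
    · intro e he
      have heD : e ∈ D := hDfin.mem_toFinset.mp he
      have hmem : e ∈ K * K⁻¹ := by
        rw [h]; exact Or.inr heD
      obtain ⟨a, ha, b, hb, hab⟩ := hmem
      have hbK : b⁻¹ ∈ K := Set.mem_inv.mp hb
      refine Finset.mem_image.mpr ⟨(a, b⁻¹), ?_, ?_⟩
      · rw [Finset.mem_offDiag]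
        refine ⟨hKfin.mem_toFinset.mpr ha, hKfin.mem_toFinset.mpr hbK, ?_⟩
        intro hab'
        apply h1D
        have hab'' : a = b⁻¹ := hab'
        have : e = 1 := by rw [← hab, hab'']; simp
        rwa [← this]
      · simp [hf, hab]
  -- cardinalities
  have hKcard : KF.card = K.ncard := (Set.ncard_eq_toFinset_card K hKfin).symm
  have hDcard : DF.card = D.ncard := (Set.ncard_eq_toFinset_card D hDfin).symm
  have hcards : (KF.offDiag.image f).card = KF.offDiag.card := by
    rw [himage, Finset.offDiag_card, hDcard, hKcard, hcard]
    rw [Nat.mul_sub_one]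
  have hinj : Set.InjOn f KF.offDiag := Finset.injOn_of_card_image_eq hcards
  -- elements of K commute
  have key : ∀ a ∈ K, ∀ b ∈ K, a * b = b * a := by
    intro a ha b hb
    by_cases hab : a = b
    · rw [hab]
    -- two preimages of a * b⁻¹
    have hq1 : a * b⁻¹ * a * b * a⁻¹ ∈ K := by
      have h1 : b⁻¹ * a * b ∈ K := by
        have := hKconj b⁻¹ a ha
        rwa [inv_inv] at this
      have := hKconj a _ h1
      convert this using 1
      group
    have hq2 : a * b * a⁻¹ ∈ K := hKconj a b hb
    have hpmem : (a, b) ∈ (KF.offDiag : Set (G × G)) := by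
      rw [Finset.mem_coe, Finset.mem_offDiag]
      exact ⟨hKfin.mem_toFinset.mpr ha, hKfin.mem_toFinset.mpr hb, hab⟩
    have hqne : a * b⁻¹ * a * b * a⁻¹ ≠ a * b * a⁻¹ := by
      intro heq
      apply hab
      have h1 : a * b⁻¹ * a * b = a * b := mul_right_cancel heq
      have h2 : a * b⁻¹ * a = a := mul_right_cancel h1
      have h3 : a * b⁻¹ = 1 := mul_right_cancel (b := a) (by rw [h2, one_mul])
      rwa [mul_inv_eq_one] at h3
    have hqmem : (a * b⁻¹ * a * b * a⁻¹, a * b * a⁻¹) ∈ (KF.offDiag : Set (G × G)) := by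
      rw [Finset.mem_coe, Finset.mem_offDiag]
      exact ⟨hKfin.mem_toFinset.mpr hq1, hKfin.mem_toFinset.mpr hq2, hqne⟩
    have hfeq : f (a, b) = f (a * b⁻¹ * a * b * a⁻¹, a * b * a⁻¹) := by
      simp only [hf]
      group
    have := hinj hpmem hqmem hfeq
    have hb_eq : b = a * b * a⁻¹ := congrArg Prod.snd this
    calc a * b = (a * b * a⁻¹) * a := by group
      _ = b * a := by rw [← hb_eq]
  -- closure is abelian
  have step : ∀ b ∈ Subgroup.closure K, ∀ a ∈ K, a * b = b * a := by
    intro b hb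
    induction hb using Subgroup.closure_induction with
    | mem y hy => exact fun a ha => key a ha y hy
    | one => intro a _; simp
    | mul y z _ _ ihy ihz =>
      intro a ha
      rw [← mul_assoc, ihy a ha, mul_assoc, ihz a ha, mul_assoc]
    | inv y _ ihy =>
      intro a ha
      have := ihy a ha
      calc a * y⁻¹ = y⁻¹ * (y * a) * y⁻¹ := by group
        _ = y⁻¹ * (a * y) * y⁻¹ := by rw [← this]
        _ = y⁻¹ * a := by group
  intro a ha b hb
  induction ha using Subgroup.closure_induction with
  | mem y hy => exact step b hb y hy
  | one => simp
  | mul y z _ _ ihy ihz => rw [mul_assoc, ihz, ← mul_assoc, ihy, mul_assoc]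
  | inv y _ ihy =>
    calc y⁻¹ * b = y⁻¹ * (b * y) * y⁻¹ := by group
      _ = y⁻¹ * (y * b) * y⁻¹ := by rw [ihy]
      _ = b * y⁻¹ := by group
end

section
/- Let K be a real conjugacy class of a finite group G with KK⁻¹ = {1} ∪ K (equivalently K² = {1} ∪ K since K is real). Then ⟨K⟩ = {1} ∪ K is an elementary abelian p-group for some prime p. -/
open scoped Pointwise

theorem real_class_square_eq_one_union_self
    {G : Type*} [Group G] [Finite G] (x : G)
    (hreal : conjugatesOf x = (conjugatesOf x)⁻¹)
    (h : conjugatesOf x * conjugatesOf x = {1} ∪ conjugatesOf x) :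
    (Subgroup.closure (conjugatesOf x) : Set G) = {1} ∪ conjugatesOf x ∧
    ∃ p : ℕ, p.Prime ∧
      (∀ a ∈ Subgroup.closure (conjugatesOf x), ∀ b ∈ Subgroup.closure (conjugatesOf x),
        a * b = b * a) ∧
      (∀ a ∈ Subgroup.closure (conjugatesOf x), a ^ p = 1) := by
  by_cases hx1 : x = 1
  · subst hx1
    have hK1 : conjugatesOf (1 : G) = {1} := by
      ext y
      constructor
      · intro hy
        exact isConj_one_right.mp hy
      · rintro rfl
        exact mem_conjugatesOf_self
    rw [hK1]
    refine ⟨?_, 2, Nat.prime_two, ?_, ?_⟩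
    · rw [Subgroup.closure_singleton_one]
      simp
    · intro a ha b hb
      rw [Subgroup.closure_singleton_one, Subgroup.mem_bot] at ha hb
      subst ha; subst hb; rfl
    · intro a ha
      rw [Subgroup.closure_singleton_one, Subgroup.mem_bot] at ha
      subst ha; simp
  · set K := conjugatesOf x with hKdef
    have hxK : x ∈ K := mem_conjugatesOf_self
    have h1K : (1 : G) ∉ K := fun h1 => hx1 (isConj_one_right.mp ((h1 : IsConj x 1).symm))
    -- the subgroup with carrier {1} ∪ K
    have hmul : ∀ a ∈ ({1} ∪ K : Set G), ∀ b ∈ ({1} ∪ K : Set G),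
        a * b ∈ ({1} ∪ K : Set G) := by
      rintro a (rfl | ha) b (rfl | hb)
      · simpa using Or.inl rfl
      · simpa using Or.inr hb
      · simpa using Or.inr ha
      · have : a * b ∈ K * K := Set.mul_mem_mul ha hb
        rwa [h] at this
    have hinv : ∀ a ∈ ({1} ∪ K : Set G), a⁻¹ ∈ ({1} ∪ K : Set G) := by
      rintro a (rfl | ha)
      · simpa using Or.inl rfl
      · right
        rw [hreal]
        simpa using ha
    let H : Subgroup G :=
      { carrier := {1} ∪ K
        one_mem' := Or.inl rfl
        mul_mem' := fun {a b} ha hb => hmul a ha b hb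
        inv_mem' := fun {a} ha => hinv a ha }
    have hmemH : ∀ a : G, a ∈ H ↔ a ∈ ({1} ∪ K : Set G) := fun a => Iff.rfl
    have hclos : Subgroup.closure K = H := by
      refine le_antisymm ((Subgroup.closure_le H).mpr Set.subset_union_right) ?_
      intro a ha
      rcases (hmemH a).mp ha with rfl | haK
      · exact Subgroup.one_mem _
      · exact Subgroup.subset_closure haK
    -- conjugation-invariance of K and of H
    have hconjK : ∀ c : G, ∀ a ∈ K, c * a * c⁻¹ ∈ K := by
      intro c a ha
      exact (ha : IsConj x a).trans (isConj_iff.mpr ⟨c, rfl⟩)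
    have hconjH : ∀ c : G, ∀ a ∈ ({1} ∪ K : Set G), c * a * c⁻¹ ∈ ({1} ∪ K : Set G) := by
      rintro c a (rfl | ha)
      · simpa using Or.inl rfl
      · exact Or.inr (hconjK c a ha)
    -- all elements of K have the same order as x
    have horder : ∀ a ∈ K, orderOf a = orderOf x := by
      intro a ha
      obtain ⟨c, hc⟩ := (ha : IsConj x a)
      exact (hc.orderOf_eq (c : G)).symm
    -- p := orderOf x is prime
    set p := orderOf x with hp_def
    have hn1 : p ≠ 1 := fun e => hx1 (orderOf_eq_one_iff.mp e)
    have hnpos : 0 < p := orderOf_pos x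
    set q := p.minFac with hq_def
    have hq : q.Prime := Nat.minFac_prime hn1
    have hqd : q ∣ p := Nat.minFac_dvd _
    have hppr : p.Prime := by
      have hy_mem : x ^ (p / q) ∈ ({1} ∪ K : Set G) := by
        have : x ^ (p / q) ∈ H := H.pow_mem ((hmemH x).mpr (Or.inr hxK)) _
        exact (hmemH _).mp this
      have hdivpos : 0 < p / q := Nat.div_pos (Nat.minFac_le hnpos) hq.pos
      have hy_ne : x ^ (p / q) ≠ 1 := by
        intro e
        have hd : p ∣ p / q := orderOf_dvd_of_pow_eq_one e
        have hlt : p / q < p := Nat.div_lt_self hnpos hq.one_lt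
        have := Nat.eq_zero_of_dvd_of_lt hd hlt
        omega
      have hyK : x ^ (p / q) ∈ K := by
        rcases hy_mem with he | hk
        · exact absurd he hy_ne
        · exact hk
      have hyq : (x ^ (p / q)) ^ q = 1 := by
        rw [← pow_mul, Nat.div_mul_cancel hqd, pow_orderOf_eq_one]
      have hdq : p ∣ q := by
        rw [← horder _ hyK]
        exact orderOf_dvd_of_pow_eq_one hyq
      rcases (Nat.Prime.eq_one_or_self_of_dvd hq p hdq) with e | e
      · exact absurd e hn1
      · rw [e]; exact hq
    -- every element of H has p-th power 1
    have hpow : ∀ a ∈ ({1} ∪ K : Set G), a ^ p = 1 := by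
      rintro a (rfl | ha)
      · simp
      · rw [← horder a ha]; exact pow_orderOf_eq_one a
    -- H is a p-group, hence has nontrivial center
    haveI : Nontrivial H := ⟨⟨⟨x, (hmemH x).mpr (Or.inr hxK)⟩, 1, by
      intro e
      exact hx1 (congrArg Subtype.val e)⟩⟩
    have hpg : IsPGroup p H := by
      intro a
      refine ⟨1, ?_⟩
      apply Subtype.ext
      rw [pow_one]
      push_cast
      exact hpow a.val ((hmemH a.val).mp a.2)
    haveI : Fact p.Prime := ⟨hppr⟩
    haveI := hpg.center_nontrivial
    obtain ⟨z, hzne⟩ := exists_ne (1 : Subgroup.center H)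
    set zv : G := ((z : H) : G) with hzv_def
    have hzcomm : ∀ b ∈ ({1} ∪ K : Set G), zv * b = b * zv := by
      intro b hb
      have := (Subgroup.mem_center_iff.mp z.2) ⟨b, (hmemH b).mpr hb⟩
      exact (congrArg Subtype.val this).symm
    have hzv_ne : zv ≠ 1 := fun e => hzne (Subtype.ext (Subtype.ext e))
    have hzvK : zv ∈ K := by
      rcases (hmemH zv).mp (z : H).2 with he | hk
      · exact absurd he hzv_ne
      · exact hk
    -- everything in K commutes with everything in H
    have hKcomm : ∀ a ∈ K, ∀ b ∈ ({1} ∪ K : Set G), a * b = b * a := by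
      intro a ha b hb
      obtain ⟨c, hc⟩ := isConj_iff.mp ((hzvK : IsConj x zv).symm.trans (ha : IsConj x a))
      have hb' : c⁻¹ * b * c ∈ ({1} ∪ K : Set G) := by
        have := hconjH c⁻¹ b hb
        rwa [inv_inv] at this
      have key := hzcomm _ hb'
      calc a * b = c * (zv * (c⁻¹ * b * c)) * c⁻¹ := by rw [← hc]; group
        _ = c * ((c⁻¹ * b * c) * zv) * c⁻¹ := by rw [key]
        _ = b * a := by rw [← hc]; group
    refine ⟨?_, p, hppr, ?_, ?_⟩
    · rw [hclos]; rfl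
    · intro a ha b hb
      rw [hclos] at ha hb
      rcases (hmemH a).mp ha with rfl | haK
      · simp
      · exact hKcomm a haK b ((hmemH b).mp hb)
    · intro a ha
      rw [hclos] at ha
      exact hpow a ((hmemH a).mp ha)
end

section
/- There is no irreducible complex character χ of a finite group G such that χχ̄ = a·1_G + b·χ + c·χ̄ with a, b, c strictly positive integers. (Indeed such an equation would force χ(1) = 1 and χ(1) = 2b + 1 simultaneously.) -/
/-!
Since `χ̄(g) = χ(g⁻¹)` (the eigenvalues of `ρ(g)` are roots of unity), averaging the identity
over `G` and using `⟨χ, χ⟩ = 1` gives `1 = a + (b + c)⟨χ, 1⟩`, so `a = 1`. Evaluating at `1`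
then gives `χ(1)² = 1 + (b + c)χ(1)`, so `χ(1)` divides `1`, and hence `b + c = 0`.
-/

open CategoryTheory Module Polynomial

namespace Module.End

section Field

variable {K V : Type*} [Field K] [AddCommGroup V] [Module K V]

lemma isSemisimple_of_pow_eq_one {f : End K V} {k : ℕ} (hk : (k : K) ≠ 0) (hf : f ^ k = 1) :
    f.IsSemisimple :=
  isSemisimple_of_squarefree_aeval_eq_zero (X_pow_sub_one_separable_iff.mpr hk).squarefree
    (by simp [hf])

lemma HasEigenvalue.pow_eq_one {f : End K V} {μ : K} (hμ : f.HasEigenvalue μ) {k : ℕ}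
    (hf : f ^ k = 1) : μ ^ k = 1 := by
  obtain ⟨v, hv⟩ := hμ.exists_hasEigenvector
  refine smul_left_injective K hv.2 ?_
  simpa [hf] using (hv.pow_apply k).symm

variable [FiniteDimensional K V]

lemma trace_eq_sum_mul_finrank_eigenspace {f g : End K V} (hf : ⨆ μ, f.eigenspace μ = ⊤)
    {s : Finset K} (hs : ∀ μ, f.HasEigenvalue μ → μ ∈ s) (φ : K → K)
    (hg : ∀ μ, ∀ v ∈ f.eigenspace μ, g v = φ μ • v) :
    LinearMap.trace K V g = ∑ μ ∈ s, φ μ * finrank K (f.eigenspace μ) := by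
  classical
  have hN : {μ | f.eigenspace μ ≠ ⊥}.Finite :=
    WellFoundedGT.finite_ne_bot_of_iSupIndep f.eigenspaces_iSupIndep
  have hmaps (μ : K) : Set.MapsTo g (f.eigenspace μ) (f.eigenspace μ) := fun v hv ↦ by
    simpa [hg μ v hv] using (f.eigenspace μ).smul_mem (φ μ) hv
  have hrestrict (μ : K) : g.restrict (hmaps μ) = φ μ • 1 :=
    LinearMap.ext fun v ↦ Subtype.ext (hg μ v v.2)
  rw [LinearMap.trace_eq_sum_trace_restrict'
    (DirectSum.isInternal_submodule_of_iSupIndep_of_iSup_eq_top f.eigenspaces_iSupIndep hf) hN hmaps]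
  simp only [hrestrict, map_smul, LinearMap.trace_one, smul_eq_mul]
  refine Finset.sum_subset (fun μ hμ ↦ hs μ (hasEigenvalue_iff.mpr (by simpa using hμ)))
    fun μ _ hμ ↦ ?_
  rw [show f.eigenspace μ = ⊥ by simpa using hμ, finrank_bot, Nat.cast_zero, mul_zero]

end Field

variable {V : Type*} [AddCommGroup V] [Module ℂ V] [FiniteDimensional ℂ V]

lemma trace_eq_conj_trace_of_mul_eq_one {f g : End ℂ V} {k : ℕ} (hk : k ≠ 0) (hf : f ^ k = 1)
    (hgf : g * f = 1) : LinearMap.trace ℂ V g = starRingEnd ℂ (LinearMap.trace ℂ V f) := by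
  have hsplit := (isSemisimple_of_pow_eq_one (by exact_mod_cast hk) hf).iSup_eigenspace_eq_top
  have hs (μ : ℂ) (hμ : f.HasEigenvalue μ) : μ ∈ nthRootsFinset k (1 : ℂ) :=
    (mem_nthRootsFinset (Nat.pos_of_ne_zero hk) 1).mpr (hμ.pow_eq_one hf)
  have hg (μ : ℂ) (v : V) (hv : v ∈ f.eigenspace μ) : g v = μ⁻¹ • v := by
    have hv' : v = μ • g v := by
      rw [← map_smul, ← mem_eigenspace_iff.mp hv]
      exact (LinearMap.congr_fun hgf v).symm
    rcases eq_or_ne μ 0 with rfl | hμ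
    · rw [zero_smul] at hv'
      rw [hv', map_zero, smul_zero]
    · exact (eq_inv_smul_iff₀ hμ).mpr hv'.symm
  rw [trace_eq_sum_mul_finrank_eigenspace hsplit hs _ hg,
    trace_eq_sum_mul_finrank_eigenspace hsplit hs id fun μ v ↦ mem_eigenspace_iff.mp, map_sum]
  refine Finset.sum_congr rfl fun μ hμ ↦ ?_
  rw [map_mul, map_natCast, id, ← Complex.inv_eq_conj]
  exact Complex.norm_eq_one_of_pow_eq_one ((mem_nthRootsFinset (Nat.pos_of_ne_zero hk) 1).mp hμ) hk

end Module.End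

namespace FDRep

variable {G : Type} [Group G]

lemma char_inv_eq_conj (V : FDRep ℂ G) {g : G} (hg : IsOfFinOrder g) :
    V.character g⁻¹ = starRingEnd ℂ (V.character g) :=
  Module.End.trace_eq_conj_trace_of_mul_eq_one hg.orderOf_pos.ne'
    (by rw [← map_pow, pow_orderOf_eq_one, map_one]) (by rw [← map_mul, inv_mul_cancel, map_one])

variable [Fintype G]

lemma sum_char_mul_conj_char_eq_card (V : FDRep ℂ G) [Simple V] :
    ∑ g, V.character g * starRingEnd ℂ (V.character g) = Nat.card G := by
  simp_rw [← char_inv_eq_conj V (isOfFinOrder_of_finite _)]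
  exact (simple_iff_char_is_norm_one V).mp ‹_›

lemma sum_char_eq_card_mul_finrank_invariants (V : FDRep ℂ G) :
    ∑ g, V.character g = Nat.card G * finrank ℂ (Representation.invariants V.ρ) := by
  have := invertibleOfNonzero (NeZero.ne (Nat.card G : ℂ))
  rw [← average_char_eq_finrank_invariants, mul_inv_cancel_left₀ (NeZero.ne _)]

end FDRep

lemma Nat.eq_zero_of_mul_self_eq_one_add_mul {n d : ℕ} (h : n * n = 1 + d * n) : d = 0 := by
  have hn : n = 1 := Nat.dvd_one.mp ((Nat.dvd_add_right (dvd_mul_left n d)).mp ⟨n, by lia⟩)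
  subst hn
  lia

theorem no_irr_char_chi_mul_conj_eq_general
    {G : Type} [Group G] [Finite G] (V : FDRep ℂ G) (hV : Simple V)
    (a b c : ℕ) (ha : 0 < a) (hb : 0 < b)
    (h : ∀ g : G, V.character g * starRingEnd ℂ (V.character g) =
      (a : ℂ) + (b : ℂ) * V.character g + (c : ℂ) * starRingEnd ℂ (V.character g)) :
    False := by
  have := Fintype.ofFinite G
  set m := finrank ℂ (Representation.invariants V.ρ)
  have hsum : (Nat.card G : ℂ) * 1 = Nat.card G * (a + (b + c) * m) := by
    calc (Nat.card G : ℂ) * 1 = ∑ g, V.character g * starRingEnd ℂ (V.character g) := by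
          rw [mul_one, FDRep.sum_char_mul_conj_char_eq_card]
      _ = ∑ g, ((a : ℂ) + b * V.character g + c * starRingEnd ℂ (V.character g)) :=
          Finset.sum_congr rfl fun g _ ↦ h g
      _ = Nat.card G * (a + (b + c) * m) := by
          simp [Finset.sum_add_distrib, ← Finset.mul_sum, ← map_sum,
            FDRep.sum_char_eq_card_mul_finrank_invariants]
          ring
  have haverage : 1 = a + (b + c) * m := by
    exact_mod_cast mul_left_cancel₀ (NeZero.ne (Nat.card G : ℂ)) hsum
  have hdim : finrank ℂ V * finrank ℂ V = a + (b + c) * finrank ℂ V := by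
    have h1 := h 1
    rw [FDRep.char_one, Complex.conj_natCast] at h1
    exact_mod_cast (by linear_combination h1 :
      (finrank ℂ V : ℂ) * finrank ℂ V = a + (b + c) * finrank ℂ V)
  obtain rfl : a = 1 := by lia
  have hbc := Nat.eq_zero_of_mul_self_eq_one_add_mul hdim
  lia

theorem no_irr_char_chi_mul_conj_eq
    {G : Type} [Group G] [Finite G] (V : FDRep ℂ G) (hV : Simple V)
    (a b c : ℕ) (ha : 0 < a) (hb : 0 < b) (hc : 0 < c)
    (h : ∀ g : G, V.character g * starRingEnd ℂ (V.character g) =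
      (a : ℂ) + (b : ℂ) * V.character g + (c : ℂ) * starRingEnd ℂ (V.character g)) :
    False :=
  no_irr_char_chi_mul_conj_eq_general V hV a b c ha hb h
end

section
/- Let K = x^G be a conjugacy class of a finite group G with KK⁻¹ = {1} ∪ D where D is a conjugacy class with |D| = |K| − 1. Then |⟨D⟩| = |K| and ⟨D⟩ = x⁻¹K. -/
open scoped Pointwise

theorem closure_D_eq_coset_of_card_sub_one
    {G : Type*} [Group G] [Finite G] (x d : G)
    (h : conjugatesOf x * (conjugatesOf x)⁻¹ = {1} ∪ conjugatesOf d)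
    (hcard : (conjugatesOf d).ncard = (conjugatesOf x).ncard - 1) :
    Nat.card (Subgroup.closure (conjugatesOf d)) = (conjugatesOf x).ncard ∧
    (Subgroup.closure (conjugatesOf d) : Set G) = x⁻¹ • conjugatesOf x := by
  set K := conjugatesOf x with hK
  set D := conjugatesOf d with hD
  set S : Set G := {1} ∪ D with hSdef
  -- conjugation invariance of conjugacy classes
  have hconjK : ∀ g k : G, k ∈ K → g * k * g⁻¹ ∈ K := by
    intro g k hk
    exact hk.trans (isConj_iff.mpr ⟨g, rfl⟩)
  have hconjD : ∀ g k : G, k ∈ D → g * k * g⁻¹ ∈ D := by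
    intro g k hk
    exact hk.trans (isConj_iff.mpr ⟨g, rfl⟩)
  have hxK : x ∈ K := mem_conjugatesOf_self
  -- Step 1 : x⁻¹ • K ⊆ S
  have hsub : x⁻¹ • K ⊆ S := by
    rintro y ⟨k, hk, rfl⟩
    show x⁻¹ * k ∈ S
    have : x⁻¹ * k = (x⁻¹ * k * x) * x⁻¹ := by group
    rw [this, ← h]
    exact Set.mul_mem_mul (by simpa using hconjK x⁻¹ k hk) (Set.inv_mem_inv.mpr hxK)
  -- Step 2 : equality of cardinalities forces x⁻¹ • K = S
  have hKne : K.Nonempty := ⟨x, hxK⟩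
  have hKpos : 1 ≤ K.ncard := (Set.ncard_pos (Set.toFinite _)).mpr hKne
  have hcardS : S.ncard ≤ K.ncard := by
    calc S.ncard ≤ ({1} : Set G).ncard + D.ncard := Set.ncard_union_le _ _
    _ = 1 + (K.ncard - 1) := by rw [Set.ncard_singleton, hcard]
    _ = K.ncard := by omega
  have hScard : (x⁻¹ • K).ncard = K.ncard := Set.ncard_smul_set _ _
  have hSeq : x⁻¹ • K = S :=
    Set.eq_of_subset_of_ncard_le hsub (hcardS.trans hScard.ge) (Set.toFinite _)
  -- Step 3 : S is symmetric
  have hinv : S⁻¹ = S := by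
    have key : ∀ y ∈ K * K⁻¹, y⁻¹ ∈ K * K⁻¹ := by
      rintro y ⟨a, ha, b, hb, rfl⟩
      rw [Set.mem_inv] at hb
      exact ⟨b⁻¹, hb, a⁻¹, Set.inv_mem_inv.mpr ha, by group⟩
    ext y
    rw [Set.mem_inv, ← h]
    exact ⟨fun hy => by simpa using key _ hy, key y⟩
  -- membership formulations
  have hmemS : ∀ y : G, y ∈ S ↔ ∃ k ∈ K, y = x⁻¹ * k := by
    intro y
    rw [← hSeq]
    constructor
    · rintro ⟨k, hk, rfl⟩; exact ⟨k, hk, rfl⟩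
    · rintro ⟨k, hk, rfl⟩; exact ⟨k, hk, rfl⟩
  -- S is conjugation invariant
  have hconjS : ∀ g s : G, s ∈ S → g * s * g⁻¹ ∈ S := by
    rintro g s (hs | hs)
    · left; simp_all
    · right; exact hconjD g s hs
  -- Step 4 : S is closed under multiplication
  have hmul : ∀ a ∈ S, ∀ b ∈ S, a * b ∈ S := by
    intro a ha b hb
    obtain ⟨k, hk, rfl⟩ := (hmemS a).mp ha
    have hb' : b⁻¹ ∈ S := by rw [← hinv]; exact Set.inv_mem_inv.mpr hb
    obtain ⟨k', hk', hbk⟩ := (hmemS b⁻¹).mp hb'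
    have hbe : b = k'⁻¹ * x := by
      have := congrArg (·⁻¹) hbk
      simpa [mul_comm] using this
    have hc : k * k'⁻¹ ∈ S := by
      rw [← h]; exact Set.mul_mem_mul hk (Set.inv_mem_inv.mpr hk')
    have : x⁻¹ * k * b = x⁻¹ * (k * k'⁻¹) * (x⁻¹)⁻¹ := by
      rw [hbe]; group
    rw [this]
    exact hconjS x⁻¹ _ hc
  have honeS : (1 : G) ∈ S := Or.inl rfl
  -- S as a subgroup
  let H : Subgroup G :=
    { carrier := S
      one_mem' := honeS
      mul_mem' := fun ha hb => hmul _ ha _ hb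
      inv_mem' := fun {a} ha => by show a⁻¹ ∈ S; rw [← hinv]; exact Set.inv_mem_inv.mpr ha }
  have hclo : (Subgroup.closure D : Set G) = S := by
    apply le_antisymm
    · exact Subgroup.closure_le H |>.mpr (Set.subset_union_right)
    · intro s hs
      rcases hs with hs | hs
      · rw [Set.mem_singleton_iff] at hs
        rw [hs]; exact (Subgroup.closure D).one_mem
      · exact Subgroup.subset_closure hs
  have hset : (Subgroup.closure D : Set G) = x⁻¹ • K := by rw [hclo, hSeq]
  refine ⟨?_, hset⟩
  have : Nat.card (Subgroup.closure D) = (Subgroup.closure D : Set G).ncard :=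
    Nat.card_coe_set_eq _
  rw [this, hset, hScard]
end

section
/- Let K = x^G be a conjugacy class of a finite group G with KK⁻¹ = {1} ∪ D where D is a conjugacy class with |D| = |K|(|K|−1). Then for any two distinct elements xᵢ, xⱼ ∈ K, the sets xᵢ⁻¹K and xⱼ⁻¹K intersect only in {1}, and xᵢ and xⱼ commute. -/
open scoped Pointwise

theorem cosets_intersect_trivially_and_commute
    {G : Type*} [Group G] [Finite G] (x d : G)
    (h : conjugatesOf x * (conjugatesOf x)⁻¹ = {1} ∪ conjugatesOf d)
    (hcard : (conjugatesOf d).ncard = (conjugatesOf x).ncard * ((conjugatesOf x).ncard - 1)) :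
    ∀ xi ∈ conjugatesOf x, ∀ xj ∈ conjugatesOf x, xi ≠ xj →
      (xi⁻¹ • conjugatesOf x) ∩ (xj⁻¹ • conjugatesOf x) = {1} ∧ xi * xj = xj * xi := by
  classical
  intro xi hxi xj hxj hne
  set K := conjugatesOf x with hK
  set D := conjugatesOf d with hD
  -- K is closed under conjugation
  have hconj : ∀ a ∈ K, ∀ c : G, c * a * c⁻¹ ∈ K := by
    intro a ha c
    have : IsConj x a := ha
    exact this.trans (isConj_iff.mpr ⟨c, rfl⟩)
  have hconj' : ∀ a ∈ K, ∀ c : G, c⁻¹ * a * c ∈ K := by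
    intro a ha c
    simpa using hconj a ha c⁻¹
  -- 1 ∉ D
  have h1D : (1 : G) ∉ D := by
    intro h1
    have hd1 : d = 1 := by
      have h2 : IsConj d (1 : G) := h1
      exact (by simpa using h2.symm : (1 : G) = d).symm
    have hDone : D = {1} := by
      rw [hD, hd1]
      ext y
      simp [conjugatesOf, isConj_comm, isConj_one_right, eq_comm]
    rw [hDone] at hcard
    simp only [Set.ncard_singleton] at hcard
    rcases Nat.eq_zero_or_pos (K.ncard - 1) with h0 | h0
    · rw [h0, Nat.mul_zero] at hcard
      exact one_ne_zero hcard
    · have h2 : 2 ≤ K.ncard := by omega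
      have := Nat.mul_le_mul h2 h0
      omega
  -- membership lemmas
  have hKK : ∀ a ∈ K, ∀ b ∈ K, a ≠ b → a * b⁻¹ ∈ D := by
    intro a ha b hb hab
    have hmem : a * b⁻¹ ∈ K * K⁻¹ := Set.mul_mem_mul ha (Set.inv_mem_inv.mpr hb)
    rw [h] at hmem
    rcases hmem with hmem | hmem
    · exact absurd (mul_inv_eq_one.mp hmem) hab
    · exact hmem
  have hDrep : ∀ y ∈ D, ∃ a ∈ K, ∃ b ∈ K, a ≠ b ∧ a * b⁻¹ = y := by
    intro y hy
    have hmem : y ∈ K * K⁻¹ := by rw [h]; exact Or.inr hy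
    rcases Set.mem_mul.mp hmem with ⟨a, ha, c, hc, hac⟩
    refine ⟨a, ha, c⁻¹, Set.inv_mem_inv.mp (by simpa using hc), ?_, by simpa using hac⟩
    intro hac'
    apply h1D
    have : y = 1 := by rw [← hac, hac']; group
    rwa [this] at hy
  -- the image of the off-diagonal of K × K under (a, b) ↦ a * b⁻¹ is D
  have himg : (fun p : G × G => p.1 * p.2⁻¹) '' Set.offDiag K = D := by
    ext y
    constructor
    · rintro ⟨⟨a, b⟩, ⟨ha, hb, hab⟩, rfl⟩
      exact hKK a ha b hb hab
    · intro hy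
      rcases hDrep y hy with ⟨a, ha, b, hb, hab, haby⟩
      exact ⟨(a, b), ⟨ha, hb, hab⟩, haby⟩
  -- cardinality of the off-diagonal
  have hKfin : K.Finite := Set.toFinite _
  have hcardT : (Set.offDiag K).ncard = K.ncard * K.ncard - K.ncard := by
    rw [Set.ncard_eq_toFinset_card _ hKfin.offDiag,
      Set.ncard_eq_toFinset_card _ hKfin]
    rw [hKfin.toFinset_offDiag, Finset.offDiag_card]
  -- injectivity on the off-diagonal
  have hinj : Set.InjOn (fun p : G × G => p.1 * p.2⁻¹) (Set.offDiag K) := by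
    apply Set.injOn_of_ncard_image_eq
    · rw [himg, hcard, hcardT, Nat.mul_sub, Nat.mul_one]
    · exact hKfin.offDiag
  -- the intersection is {1}
  have hint : (xi⁻¹ • K) ∩ (xj⁻¹ • K) = {1} := by
    ext g
    simp only [Set.mem_inter_iff, Set.mem_singleton_iff]
    constructor
    · rintro ⟨hg1, hg2⟩
      rcases hg1 with ⟨a, ha, rfl⟩
      rcases hg2 with ⟨b, hb, hba⟩
      simp only [smul_eq_mul] at hba ⊢
      by_contra hg
      have ha' : xi⁻¹ * a * xi ∈ K := hconj' a ha xi
      have hb' : xj⁻¹ * b * xj ∈ K := hconj' b hb xj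
      have hgi : xi⁻¹ * a ≠ 1 := hg
      have hgj : xj⁻¹ * b ≠ 1 := by rw [hba]; exact hg
      have hpa : (xi⁻¹ * a * xi, xi) ∈ Set.offDiag K := by
        refine ⟨ha', hxi, fun hh => hgi ?_⟩
        have : xi⁻¹ * a = 1 := by
          have := mul_right_cancel (b := xi) (by simpa using hh : xi⁻¹ * a * xi = 1 * xi)
          exact this
        exact this
      have hpb : (xj⁻¹ * b * xj, xj) ∈ Set.offDiag K := by
        refine ⟨hb', hxj, fun hh => hgj ?_⟩
        have := mul_right_cancel (b := xj) (by simpa using hh : xj⁻¹ * b * xj = 1 * xj)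
        exact this
      have hfeq : (fun p : G × G => p.1 * p.2⁻¹) (xi⁻¹ * a * xi, xi)
          = (fun p : G × G => p.1 * p.2⁻¹) (xj⁻¹ * b * xj, xj) := by
        simp only
        rw [mul_inv_cancel_right, mul_inv_cancel_right, hba]
      have := hinj hpa hpb hfeq
      exact hne (congrArg Prod.snd this)
    · intro hg
      subst hg
      exact ⟨⟨xi, hxi, by simp⟩, ⟨xj, hxj, by simp⟩⟩
  refine ⟨hint, ?_⟩
  -- commutation
  have hw : xi * (xj⁻¹ * xi * xj) * xi⁻¹ ∈ K := hconj _ (hconj' xi hxi xj) xi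
  have hz : xi * xj * xi⁻¹ ∈ K := hconj xj hxj xi
  have hg : xj⁻¹ * xi * xj * xi⁻¹ ∈ (xi⁻¹ • K) ∩ (xj⁻¹ • K) := by
    constructor
    · refine ⟨xi * (xj⁻¹ * xi * xj) * xi⁻¹, hw, ?_⟩
      simp only [smul_eq_mul]
      group
    · refine ⟨xi * xj * xi⁻¹, hz, ?_⟩
      simp only [smul_eq_mul]
      group
  rw [hint] at hg
  have h1 : xj⁻¹ * xi * xj * xi⁻¹ = 1 := hg
  have h2 : xi * xj = xj * xi := by
    have : xi * xj * xi⁻¹ = xj := by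
      have := congrArg (fun t => xj * t) h1
      simpa [mul_assoc] using this
    calc xi * xj = (xi * xj * xi⁻¹) * xi := by group
    _ = xj * xi := by rw [this]
  exact h2
end

section
/- Let G be a finite group, K = x^G a conjugacy class with KK⁻¹ = {1} ∪ D for a conjugacy class D with |D| = |K|, and suppose xK⁻¹ = x⁻¹K. Then x² ∈ Z(G) and ⟨K⟩ is abelian. -/
open scoped Pointwise

theorem sq_central_and_closure_abelian
    {G : Type*} [Group G] [Finite G] (x d : G)
    (h : conjugatesOf x * (conjugatesOf x)⁻¹ = {1} ∪ conjugatesOf d)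
    (hcard : (conjugatesOf d).ncard = (conjugatesOf x).ncard)
    (hcoset : x • (conjugatesOf x)⁻¹ = x⁻¹ • conjugatesOf x) :
    x ^ 2 ∈ Subgroup.center G ∧
    ∀ a ∈ Subgroup.closure (conjugatesOf x), ∀ b ∈ Subgroup.closure (conjugatesOf x),
      a * b = b * a := by
  classical
  set K : Set G := conjugatesOf x with hKdef
  set D : Set G := conjugatesOf d with hDdef
  have hxK : x ∈ K := mem_conjugatesOf_self
  -- K is closed under conjugation
  have hKconj : ∀ (g : G), ∀ k ∈ K, g * k * g⁻¹ ∈ K := by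
    intro g k hk
    exact (hk : IsConj x k).trans (isConj_iff.2 ⟨g, rfl⟩)
  -- D is closed under conjugation
  have hDconj : ∀ (g : G), ∀ e ∈ D, g * e * g⁻¹ ∈ D := by
    intro g e he
    exact (he : IsConj d e).trans (isConj_iff.2 ⟨g, rfl⟩)
  -- E = {1} ∪ D is closed under conjugation
  have hEconj : ∀ (g : G), ∀ e ∈ ({1} ∪ D : Set G), g * e * g⁻¹ ∈ ({1} ∪ D : Set G) := by
    rintro g e (he | he)
    · rw [Set.mem_singleton_iff] at he; subst he
      left; simp
    · exact Or.inr (hDconj g e he)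
  -- products a * b⁻¹ lie in E
  have hmul : ∀ a ∈ K, ∀ b ∈ K, a * b⁻¹ ∈ ({1} ∪ D : Set G) := by
    intro a ha b hb
    rw [← h]
    exact Set.mul_mem_mul ha (Set.inv_mem_inv.2 hb)
  -- products a⁻¹ * b lie in E as well
  have hmul' : ∀ a ∈ K, ∀ b ∈ K, a⁻¹ * b ∈ ({1} ∪ D : Set G) := by
    intro a ha b hb
    have h1 : b * a⁻¹ ∈ ({1} ∪ D : Set G) := hmul b hb a ha
    have h2 : a⁻¹ * (b * a⁻¹) * (a⁻¹)⁻¹ ∈ ({1} ∪ D : Set G) := hEconj a⁻¹ _ h1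
    have h3 : a⁻¹ * (b * a⁻¹) * (a⁻¹)⁻¹ = a⁻¹ * b := by group
    rwa [h3] at h2
  -- the coset hypothesis, elementwise
  have hc1 : ∀ k ∈ K, ∃ m ∈ K, x * k⁻¹ = x⁻¹ * m := by
    intro k hk
    have h1 : x * k⁻¹ ∈ x • (K⁻¹ : Set G) := by
      have : k⁻¹ ∈ (K⁻¹ : Set G) := Set.inv_mem_inv.2 hk
      simpa [smul_eq_mul] using Set.smul_mem_smul_set (a := x) this
    rw [hcoset] at h1
    obtain ⟨m, hm, hm2⟩ := h1
    exact ⟨m, hm, by simpa [smul_eq_mul] using hm2.symm⟩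
  have hc2 : ∀ k ∈ K, ∃ m ∈ K, x⁻¹ * k = x * m⁻¹ := by
    intro k hk
    have h1 : x⁻¹ * k ∈ x⁻¹ • (K : Set G) := by
      simpa [smul_eq_mul] using Set.smul_mem_smul_set (a := x⁻¹) hk
    rw [← hcoset] at h1
    obtain ⟨m', hm', hm2⟩ := h1
    refine ⟨m'⁻¹, ?_, ?_⟩
    · exact Set.mem_inv.1 hm'
    · simpa [smul_eq_mul] using hm2.symm
  -- key consequences: k^2 * m⁻¹ ∈ K and m⁻¹ * k^2 ∈ K for k, m ∈ K
  have hsq1 : ∀ k ∈ K, ∀ m ∈ K, k ^ 2 * m⁻¹ ∈ K := by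
    intro k hk m hm
    obtain ⟨g, hg⟩ := isConj_iff.1 (hk : IsConj x k)
    have hm' : g⁻¹ * m * g ∈ K := by
      have := hKconj g⁻¹ m hm
      simpa using this
    obtain ⟨n, hn, heq⟩ := hc1 _ hm'
    have h2 : g * n * g⁻¹ ∈ K := hKconj g n hn
    have h3 : g * n * g⁻¹ = k ^ 2 * m⁻¹ := by
      have hn' : n = x * (x * (g⁻¹ * m * g)⁻¹) := by
        rw [heq]; group
      subst hn'
      rw [← hg]
      simp only [pow_two]; simp [mul_assoc, mul_inv_rev]
    rwa [h3] at h2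
  have hsq2 : ∀ k ∈ K, ∀ m ∈ K, m⁻¹ * k ^ 2 ∈ K := by
    intro k hk m hm
    obtain ⟨g, hg⟩ := isConj_iff.1 (hk : IsConj x k)
    have hm' : g⁻¹ * m * g ∈ K := by
      have := hKconj g⁻¹ m hm
      simpa using this
    obtain ⟨n, hn, heq⟩ := hc2 _ hm'
    have h2 : g * n * g⁻¹ ∈ K := hKconj g n hn
    have h3 : g * n * g⁻¹ = m⁻¹ * k ^ 2 := by
      have hn' : n = (x⁻¹ * (x⁻¹ * (g⁻¹ * m * g)))⁻¹ := by
        rw [heq]; group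
      subst hn'
      rw [← hg]
      simp only [pow_two]; simp [mul_assoc, mul_inv_rev]
    rwa [h3] at h2
  -- if 1 ∈ D then D = {1}
  have h1D_eq : (1 : G) ∈ D → D = {1} := by
    intro h1
    have hd1 : d = 1 := isConj_one_left.1 (h1 : IsConj d 1)
    subst hd1
    ext e
    simp only [Set.mem_singleton_iff]
    constructor
    · intro he; exact (isConj_one_right.1 (he : IsConj 1 e))
    · rintro rfl; exact h1
  -- cardinality of E when 1 ∉ D
  have hEcard : (1 : G) ∉ D → ({1} ∪ D : Set G).ncard = K.ncard + 1 := by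
    intro h1D
    rw [Set.singleton_union, Set.ncard_insert_of_notMem h1D D.toFinite, hcard]
  -- absorbing lemmas
  have habsorbL : ∀ g : G, (∀ k ∈ K, g * k ∈ K) → g = 1 := by
    intro g hg
    have hgE : g ∈ ({1} ∪ D : Set G) := by
      have h1 : (g * x) * x⁻¹ ∈ ({1} ∪ D : Set G) := hmul _ (hg x hxK) x hxK
      simpa using h1
    rcases hgE with hg1 | hgD
    · simpa using hg1
    by_cases h1D : (1 : G) ∈ D
    · have := h1D_eq h1D ▸ hgD
      simpa using this
    exfalso
    -- every element of D absorbs K on the left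
    have hconjabs : ∀ e ∈ D, ∀ k ∈ K, e * k ∈ K := by
      intro e he k hk
      obtain ⟨c, hc⟩ := isConj_iff.1 ((hgD : IsConj d g).symm.trans (he : IsConj d e))
      -- hc : c * g * c⁻¹ = e
      have h1 : c⁻¹ * k * c ∈ K := by simpa using hKconj c⁻¹ k hk
      have h2 : g * (c⁻¹ * k * c) ∈ K := hg _ h1
      have h3 : c * (g * (c⁻¹ * k * c)) * c⁻¹ ∈ K := hKconj c _ h2
      have h4 : c * (g * (c⁻¹ * k * c)) * c⁻¹ = e * k := by rw [← hc]; group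
      rwa [h4] at h3
    have hEsub : ({1} ∪ D : Set G) ⊆ (fun m => m * x⁻¹) '' K := by
      rintro e (he | he)
      · rw [Set.mem_singleton_iff] at he; subst he
        exact ⟨x, hxK, by simp⟩
      · exact ⟨e * x, hconjabs e he x hxK, by group⟩
    have hle : ({1} ∪ D : Set G).ncard ≤ K.ncard := by
      calc ({1} ∪ D : Set G).ncard ≤ ((fun m => m * x⁻¹) '' K).ncard :=
            Set.ncard_le_ncard hEsub (K.toFinite.image _)
        _ = K.ncard := Set.ncard_image_of_injective _ (mul_left_injective x⁻¹)
    rw [hEcard h1D] at hle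
    omega
  have habsorbR : ∀ g : G, (∀ k ∈ K, k * g ∈ K) → g = 1 := by
    intro g hg
    have hgE : g ∈ ({1} ∪ D : Set G) := by
      have h1 : x⁻¹ * (x * g) ∈ ({1} ∪ D : Set G) := hmul' x hxK _ (hg x hxK)
      simpa using h1
    rcases hgE with hg1 | hgD
    · simpa using hg1
    by_cases h1D : (1 : G) ∈ D
    · have := h1D_eq h1D ▸ hgD
      simpa using this
    exfalso
    have hconjabs : ∀ e ∈ D, ∀ k ∈ K, k * e ∈ K := by
      intro e he k hk
      obtain ⟨c, hc⟩ := isConj_iff.1 ((hgD : IsConj d g).symm.trans (he : IsConj d e))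
      have h1 : c⁻¹ * k * c ∈ K := by simpa using hKconj c⁻¹ k hk
      have h2 : (c⁻¹ * k * c) * g ∈ K := hg _ h1
      have h3 : c * ((c⁻¹ * k * c) * g) * c⁻¹ ∈ K := hKconj c _ h2
      have h4 : c * ((c⁻¹ * k * c) * g) * c⁻¹ = k * e := by rw [← hc]; group
      rwa [h4] at h3
    have hEsub : ({1} ∪ D : Set G) ⊆ (fun m => x⁻¹ * m) '' K := by
      rintro e (he | he)
      · rw [Set.mem_singleton_iff] at he; subst he
        exact ⟨x, hxK, by simp⟩
      · exact ⟨x * e, hconjabs e he x hxK, by group⟩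
    have hle : ({1} ∪ D : Set G).ncard ≤ K.ncard := by
      calc ({1} ∪ D : Set G).ncard ≤ ((fun m => x⁻¹ * m) '' K).ncard :=
            Set.ncard_le_ncard hEsub (K.toFinite.image _)
        _ = K.ncard := Set.ncard_image_of_injective _ (mul_right_injective x⁻¹)
    rw [hEcard h1D] at hle
    omega
  -- all squares of elements of K are equal to x^2
  have hk2 : ∀ k ∈ K, k ^ 2 = x ^ 2 := by
    intro k hk
    have habs : ∀ m ∈ K, m * ((k ^ 2)⁻¹ * x ^ 2) ∈ K := by
      intro m hm
      have hn : k ^ 2 * m⁻¹ ∈ K := hsq1 k hk m hm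
      have h2 : (k ^ 2 * m⁻¹)⁻¹ * x ^ 2 ∈ K := hsq2 x hxK _ hn
      have h3 : (k ^ 2 * m⁻¹)⁻¹ * x ^ 2 = m * ((k ^ 2)⁻¹ * x ^ 2) := by group
      rwa [h3] at h2
    have ht := habsorbR _ habs
    exact inv_mul_eq_one.1 ht
  have hcenter : x ^ 2 ∈ Subgroup.center G := by
    rw [Subgroup.mem_center_iff]
    intro g
    have h1 : (g * x * g⁻¹) ^ 2 = x ^ 2 := hk2 _ (hKconj g x hxK)
    have h2 : g * x ^ 2 * g⁻¹ = x ^ 2 := by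
      have he : (g * x * g⁻¹) ^ 2 = g * x ^ 2 * g⁻¹ := by
        simp only [pow_two]; simp [mul_assoc]
      rw [← he, h1]
    calc g * x ^ 2 = (g * x ^ 2 * g⁻¹) * g := by group
      _ = x ^ 2 * g := by rw [h2]
  -- orbit–stabilizer: class size times centralizer size is the group order
  have hcc : ∀ g : G, (conjugatesOf g).ncard * (Set.centralizer {g}).ncard = Nat.card G := by
    intro g
    have h1 := Nat.card_congr (MulAction.orbitProdStabilizerEquivGroup (ConjAct G) g)
    rw [Nat.card_prod] at h1
    have h2 : MulAction.orbit (ConjAct G) g = conjugatesOf g := by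
      rw [ConjAct.orbit_eq_carrier_conjClasses]
      ext b
      rw [ConjClasses.mem_carrier_iff_mk_eq, ConjClasses.mk_eq_mk_iff_isConj]
      exact isConj_comm
    have h3 : Nat.card (MulAction.stabilizer (ConjAct G) g) = (Set.centralizer {g}).ncard := by
      rw [← Nat.card_coe_set_eq]
      refine (Nat.card_congr (Equiv.subtypeEquiv ConjAct.toConjAct.toEquiv fun a => ?_)).symm
      have hsmul : ConjAct.toConjAct.toEquiv a • g = a * g * a⁻¹ := by
        rw [ConjAct.smul_def]
        norm_num
      rw [MulAction.mem_stabilizer_iff, hsmul, mul_inv_eq_iff_eq_mul]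
      constructor
      · intro ha
        exact ((Set.mem_centralizer_iff.1 ha) g rfl).symm
      · intro ha
        rw [Set.mem_centralizer_iff]
        intro m hm
        rw [Set.mem_singleton_iff.1 hm]
        exact ha.symm
    rw [h2, Nat.card_coe_set_eq, h3] at h1
    have h4 : Nat.card (ConjAct G) = Nat.card G := Nat.card_congr ConjAct.ofConjAct.toEquiv
    rw [h4] at h1
    exact h1
  -- pairwise commutation of elements of K
  have hcomm : ∀ a ∈ K, ∀ b ∈ K, a * b = b * a := by
    intro a ha b hb
    by_cases h1D : (1 : G) ∈ D
    · have hD1 := h1D_eq h1D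
      have hab : a * b⁻¹ ∈ ({1} ∪ D : Set G) := hmul a ha b hb
      rw [hD1] at hab
      have : a * b⁻¹ = 1 := by simpa using hab
      have hab' : a = b := by
        have := mul_inv_eq_one.1 this
        exact this
      rw [hab']
    by_cases hd0 : a * b⁻¹ = 1
    · rw [mul_inv_eq_one.1 hd0]
    set d₀ : G := a * b⁻¹ with hd₀def
    have hd0D : d₀ ∈ D := by
      rcases hmul a ha b hb with h1 | h1
      · exact absurd (by simpa using h1) hd0
      · exact h1
    -- find k ∈ K with d₀⁻¹ * k ∉ K
    have hk_ex : ∃ k ∈ K, d₀⁻¹ * k ∉ K := by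
      by_contra hcon
      push_neg at hcon
      have := habsorbL d₀⁻¹ hcon
      exact hd0 (by rwa [inv_eq_one] at this)
    obtain ⟨k, hkK, hkd⟩ := hk_ex
    -- the coset k • K⁻¹ misses exactly d₀ in E
    have hsubE : (k • (K⁻¹ : Set G)) ⊆ ({1} ∪ D : Set G) := by
      rintro _ ⟨m', hm', rfl⟩
      have hm : m'⁻¹ ∈ K := Set.mem_inv.1 hm'
      have := hmul k hkK m'⁻¹ hm
      simpa [smul_eq_mul] using this
    have hd0notin : d₀ ∉ (k • (K⁻¹ : Set G)) := by
      rintro ⟨m', hm', hEq⟩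
      have hEq : k * m' = d₀ := hEq
      have hm : m'⁻¹ ∈ K := Set.mem_inv.1 hm'
      have : m'⁻¹ = d₀⁻¹ * k := by
        rw [← hEq]; group
      rw [this] at hm
      exact hkd hm
    have hdiff : ({1} ∪ D : Set G) \ (k • (K⁻¹ : Set G)) = {d₀} := by
      have hcards : (k • (K⁻¹ : Set G)).ncard = K.ncard := by
        rw [Set.ncard_smul_set, Set.ncard_inv]
      have h1 : (({1} ∪ D : Set G) \ (k • (K⁻¹ : Set G))).ncard = 1 := by
        rw [Set.ncard_diff hsubE (Set.toFinite _), hcards, hEcard h1D]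
        omega
      obtain ⟨e, he⟩ := Set.ncard_eq_one.1 h1
      have hd0mem : d₀ ∈ ({1} ∪ D : Set G) \ (k • (K⁻¹ : Set G)) :=
        ⟨Set.mem_union_right _ hd0D, hd0notin⟩
      rw [he] at hd0mem
      rw [he, Set.mem_singleton_iff.1 hd0mem]
    -- centralizer of k is contained in centralizer of d₀
    have hCsub : Set.centralizer {k} ⊆ Set.centralizer ({d₀} : Set G) := by
      intro g hg
      have hgk : k * g = g * k := (Set.mem_centralizer_iff.1 hg) k rfl
      rw [Set.mem_centralizer_iff]
      rintro m ⟨rfl⟩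
      have h1 : g * d₀ * g⁻¹ ∈ ({1} ∪ D : Set G) :=
        hEconj g d₀ (Set.mem_union_right _ hd0D)
      have h2 : g * d₀ * g⁻¹ ∉ (k • (K⁻¹ : Set G)) := by
        rintro ⟨m', hm', hEq⟩
        have hEq : k * m' = g * d₀ * g⁻¹ := hEq
        apply hd0notin
        refine ⟨g⁻¹ * m' * g, ?_, ?_⟩
        · rw [Set.mem_inv] at hm' ⊢
          have := hKconj g⁻¹ m'⁻¹ hm'
          simpa [mul_assoc] using this
        · show k * (g⁻¹ * m' * g) = d₀
          have hkg : g⁻¹ * k * g = k := by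
            calc g⁻¹ * k * g = g⁻¹ * (k * g) := by group
              _ = g⁻¹ * (g * k) := by rw [hgk]
              _ = k := by group
          calc k * (g⁻¹ * m' * g) = (g⁻¹ * k * g) * (g⁻¹ * m' * g) := by rw [hkg]
            _ = g⁻¹ * (k * m') * g := by group
            _ = g⁻¹ * (g * d₀ * g⁻¹) * g := by rw [hEq]
            _ = d₀ := by group
      have h3 : g * d₀ * g⁻¹ ∈ ({d₀} : Set G) := hdiff ▸ ⟨h1, h2⟩
      have h4 : g * d₀ * g⁻¹ = d₀ := Set.mem_singleton_iff.1 h3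
      have h5 : g * d₀ = d₀ * g := by
        calc g * d₀ = (g * d₀ * g⁻¹) * g := by group
          _ = d₀ * g := by rw [h4]
      exact h5.symm
    -- centralizers have the same size
    have hKk : conjugatesOf k = K := ((hkK : IsConj x k).conjugatesOf_eq).symm
    have hDd : conjugatesOf d₀ = D := ((hd0D : IsConj d d₀).conjugatesOf_eq).symm
    have hKpos : 0 < K.ncard := (Set.ncard_pos K.toFinite).2 ⟨x, hxK⟩
    have hCcard : (Set.centralizer ({d₀} : Set G)).ncard ≤ (Set.centralizer {k}).ncard := by
      have e1 := hcc k
      have e2 := hcc d₀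
      rw [hKk] at e1
      rw [hDd, hcard] at e2
      have : K.ncard * (Set.centralizer {k}).ncard = K.ncard * (Set.centralizer {d₀}).ncard :=
        e1.trans e2.symm
      exact le_of_eq (Nat.eq_of_mul_eq_mul_left hKpos this).symm
    have hCeq : Set.centralizer ({k} : Set G) = Set.centralizer ({d₀} : Set G) :=
      Set.eq_of_subset_of_ncard_le hCsub hCcard (Set.toFinite _)
    have hdk : k * d₀ = d₀ * k := by
      have hd₀mem : d₀ ∈ Set.centralizer ({d₀} : Set G) := by
        rw [Set.mem_centralizer_iff]
        rintro m ⟨rfl⟩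
        rfl
      rw [← hCeq] at hd₀mem
      exact (Set.mem_centralizer_iff.1 hd₀mem) k rfl
    -- d₀ is an involution
    have hd2 : d₀ * d₀ = 1 := by
      by_cases hdkK : d₀ * k ∈ K
      · have e1 : (d₀ * k) ^ 2 = x ^ 2 := hk2 _ hdkK
        have e2 : k ^ 2 = x ^ 2 := hk2 k hkK
        have e3 : (d₀ * k) * (d₀ * k) = k * k := by
          rw [← sq, ← sq, e1, e2]
        have e4 : k * (d₀ * d₀) * k = k * 1 * k := by
          calc k * (d₀ * d₀) * k = (k * d₀) * (d₀ * k) := by group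
            _ = (d₀ * k) * (d₀ * k) := by rw [hdk]
            _ = k * k := e3
            _ = k * 1 * k := by group
        calc d₀ * d₀ = k⁻¹ * (k * (d₀ * d₀) * k) * k⁻¹ := by group
          _ = k⁻¹ * (k * 1 * k) * k⁻¹ := by rw [e4]
          _ = 1 := by group
      · have h1 : d₀⁻¹ ∈ ({1} ∪ D : Set G) := by
          have := hmul b hb a ha
          have heq : b * a⁻¹ = d₀⁻¹ := by rw [hd₀def]; group
          rwa [heq] at this
        have h2 : d₀⁻¹ ∉ (k • (K⁻¹ : Set G)) := by
          rintro ⟨m', hm', hEq⟩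
          have hEq : k * m' = d₀⁻¹ := hEq
          apply hdkK
          have hm : m'⁻¹ ∈ K := Set.mem_inv.1 hm'
          have h5 : m' = k⁻¹ * d₀⁻¹ := by rw [← hEq]; group
          have : m'⁻¹ = d₀ * k := by rw [h5]; group
          rwa [this] at hm
        have h3 : d₀⁻¹ ∈ ({d₀} : Set G) := hdiff ▸ ⟨h1, h2⟩
        have h4 : d₀⁻¹ = d₀ := Set.mem_singleton_iff.1 h3
        calc d₀ * d₀ = d₀ * d₀⁻¹ := by rw [h4]
          _ = 1 := mul_inv_cancel d₀
    -- conclude a * b = b * a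
    have hinv : d₀⁻¹ = d₀ := inv_eq_of_mul_eq_one_right hd2
    have hab' : a * b⁻¹ = b * a⁻¹ := by
      have : b * a⁻¹ = d₀⁻¹ := by rw [hd₀def]; group
      rw [this, hinv]
    have hsq : b * b = a * a := by
      have e1 : a ^ 2 = x ^ 2 := hk2 a ha
      have e2 : b ^ 2 = x ^ 2 := hk2 b hb
      rw [← sq, ← sq, e1, e2]
    calc a * b = (a * b⁻¹) * (b * b) := by group
      _ = (b * a⁻¹) * (a * a) := by rw [hab', hsq]
      _ = b * a := by group
  -- final assembly
  refine ⟨hcenter, ?_⟩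
  have hKle : Subgroup.closure K ≤ Subgroup.centralizer K := by
    rw [Subgroup.closure_le]
    intro a ha
    rw [SetLike.mem_coe, Subgroup.mem_centralizer_iff]
    intro b hb
    exact hcomm b hb a ha
  intro a haM b hbM
  have hb' : ∀ s ∈ K, s * b = b * s := Subgroup.mem_centralizer_iff.1 (hKle hbM)
  have hbc : Subgroup.closure K ≤ Subgroup.centralizer {b} := by
    rw [Subgroup.closure_le]
    intro s hs
    rw [SetLike.mem_coe, Subgroup.mem_centralizer_iff]
    rintro m ⟨rfl⟩
    exact (hb' s hs).symm
  have := Subgroup.mem_centralizer_iff.1 (hbc haM) b rfl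
  exact this.symm
end
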